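/- arXiv:1105.4668 — 4 statements merged into one kernel-verified Lean document; each statement's English description precedes it below -/
import Mathlib

section
/- Let $\rho$ be a density matrix on $\mathbb{C}^2\otimes\mathbb{C}^3$. For all $2\times 2$ unitaries $U$ and $3\times 3$ unitaries $V$, set $A_i = U\sigma_i U^\dagger$ ($i=1,2,3$) and $B_j = V\lambda_j V^\dagger$ ($j=1,2,3,4$). If for all unitaries $U,V$ the inequality $\langle 2I_2\otimes I_3 - I_2\otimes B_1 + 2I_2\otimes B_2 + 3A_3\otimes B_1\rangle_\rho \geq \big(\langle 3I_2\otimes B_1 + 2A_3\otimes I_3 - A_3\otimes B_1 + 2A_3\otimes B_2\rangle_\rho^2 + 9\langle A_1\otimes B_3 + A_2\otimes B_4\rangle_\rho^2\big)^{1/2}$ holds, then $\langle\Psi|\rho^{T_1}|\Psi\rangle \geq 0$ for all $|\Psi\rangle\in\mathbb{C}^2\otimes\mathbb{C}^3$, i.e. $\rho^{T_1}$ is positive semidefinite. -/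
open Matrix Kronecker
open scoped ComplexOrder

noncomputable section

abbrev M2 : Type := Matrix (Fin 2) (Fin 2) ℂ
abbrev M3 : Type := Matrix (Fin 3) (Fin 3) ℂ
abbrev M6 : Type := Matrix (Fin 2 × Fin 3) (Fin 2 × Fin 3) ℂ

/-- Pauli matrices -/
def sig1 : M2 := Matrix.single 0 1 1 + Matrix.single 1 0 1
def sig2 : M2 := Complex.I • Matrix.single 0 1 1 - Complex.I • Matrix.single 1 0 1
def sig3 : M2 := Matrix.single 0 0 1 - Matrix.single 1 1 1

/-- Gell-Mann-type matrices on C^3 -/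
def lam1 : M3 := Matrix.single 0 0 1 - Matrix.single 1 1 1
def lam2 : M3 := Matrix.single 0 0 1 - Matrix.single 2 2 1
def lam3 : M3 := Matrix.single 0 1 1 + Matrix.single 1 0 1
def lam4 : M3 := Complex.I • Matrix.single 0 1 1 - Complex.I • Matrix.single 1 0 1

/-- partial transpose on the first (2-dimensional) factor -/
def PT {d : ℕ} (ρ : Matrix (Fin 2 × Fin d) (Fin 2 × Fin d) ℂ) :
    Matrix (Fin 2 × Fin d) (Fin 2 × Fin d) ℂ :=
  fun p q => ρ (q.1, p.2) (p.1, q.2)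

/-- expectation value of an observable M in the state ρ -/
def expval {n : Type} [Fintype n] (ρ M : Matrix n n ℂ) : ℝ := ((ρ * M).trace).re

/-- projector |ψ⟩⟨ψ| -/
def proj {n : Type} (ψ : n → ℂ) : Matrix n n ℂ := Matrix.vecMulVec ψ (star ψ)


/-- A_i = U σ_i U†, B_j = V λ_j V† -/
def OA (U : M2) (i : Fin 3) : M2 := U * (![sig1, sig2, sig3] i) * Uᴴ
def OB (V : M3) (j : Fin 4) : M3 := V * (![lam1, lam2, lam3, lam4] j) * Vᴴ

/-- the observable ⟨2 I⊗I - I⊗B₁ + 2 I⊗B₂ + 3 A₃⊗B₁⟩ -/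
def Obs0 (U : M2) (V : M3) : M6 :=
  (2:ℂ) • ((1:M2) ⊗ₖ (1:M3)) - (1:M2) ⊗ₖ OB V 0 + (2:ℂ) • ((1:M2) ⊗ₖ OB V 1)
    + (3:ℂ) • (OA U 2 ⊗ₖ OB V 0)

/-- the observable 3 I⊗B₁ + 2 A₃⊗I - A₃⊗B₁ + 2 A₃⊗B₂ -/
def Obs1 (U : M2) (V : M3) : M6 :=
  (3:ℂ) • ((1:M2) ⊗ₖ OB V 0) + (2:ℂ) • (OA U 2 ⊗ₖ (1:M3)) - OA U 2 ⊗ₖ OB V 0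
    + (2:ℂ) • (OA U 2 ⊗ₖ OB V 1)

/-- the observable A₁⊗B₃ + A₂⊗B₄ -/
def Obs2 (U : M2) (V : M3) : M6 := OA U 0 ⊗ₖ OB V 2 + OA U 1 ⊗ₖ OB V 3


lemma sig1_eq : sig1 = !![0,1;1,0] := by
  ext i j; fin_cases i <;> fin_cases j <;> simp [sig1, Matrix.single]
lemma sig2_eq : sig2 = !![0,Complex.I;-Complex.I,0] := by
  ext i j; fin_cases i <;> fin_cases j <;> simp [sig2, Matrix.single]
lemma sig3_eq : sig3 = !![1,0;0,-1] := by
  ext i j; fin_cases i <;> fin_cases j <;> simp [sig3, Matrix.single]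
lemma lam1_eq : lam1 = !![1,0,0;0,-1,0;0,0,0] := by
  ext i j; fin_cases i <;> fin_cases j <;> simp [lam1, Matrix.single, Matrix.vecHead, Matrix.vecTail]
lemma lam2_eq : lam2 = !![1,0,0;0,0,0;0,0,-1] := by
  ext i j; fin_cases i <;> fin_cases j <;> simp [lam2, Matrix.single, Matrix.vecHead, Matrix.vecTail]
lemma lam3_eq : lam3 = !![0,1,0;1,0,0;0,0,0] := by
  ext i j; fin_cases i <;> fin_cases j <;> simp [lam3, Matrix.single, Matrix.vecHead, Matrix.vecTail]
lemma lam4_eq : lam4 = !![0,Complex.I,0;-Complex.I,0,0;0,0,0] := by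
  ext i j; fin_cases i <;> fin_cases j <;> simp [lam4, Matrix.single, Matrix.vecHead, Matrix.vecTail]

def W0 (a b : ℝ) : M6 :=
  ((a:ℂ)^2) • (Matrix.single 0 0 1 ⊗ₖ Matrix.single (0:Fin 3) (0:Fin 3) (1:ℂ))
    + ((b:ℂ)^2) • (Matrix.single 1 1 1 ⊗ₖ Matrix.single (1:Fin 3) (1:Fin 3) (1:ℂ))
    + ((a:ℂ)*(b:ℂ)) • (Matrix.single 1 0 1 ⊗ₖ Matrix.single (0:Fin 3) (1:Fin 3) (1:ℂ))
    + ((a:ℂ)*(b:ℂ)) • (Matrix.single 0 1 1 ⊗ₖ Matrix.single (1:Fin 3) (0:Fin 3) (1:ℂ))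

lemma OA_one (i : Fin 3) : OA 1 i = ![sig1, sig2, sig3] i := by simp [OA]
lemma OB_one (j : Fin 4) : OB 1 j = ![lam1, lam2, lam3, lam4] j := by simp [OB]

set_option maxHeartbeats 1000000 in
lemma base12 (a b : ℝ) :
    (12:ℂ) • W0 a b = ((a:ℂ)^2+(b:ℂ)^2) • Obs0 1 1 + ((a:ℂ)^2-(b:ℂ)^2) • Obs1 1 1
      + (6*(a:ℂ)*(b:ℂ)) • Obs2 1 1 := by
  rw [Obs0, Obs1, Obs2, OA_one, OB_one, OB_one, OB_one, OB_one, OA_one, OA_one]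
  ext ⟨i, j⟩ ⟨k, l⟩
  fin_cases i <;> fin_cases j <;> fin_cases k <;> fin_cases l <;>
    simp [W0, sig1_eq, sig2_eq, sig3_eq, lam1_eq, lam2_eq, lam3_eq, lam4_eq,
      Matrix.single, Matrix.one_apply, Matrix.vecHead, Matrix.vecTail, Prod.ext_iff] <;>
    ring

lemma kron_ct {m n : Type} [Fintype m] [Fintype n] [DecidableEq m] [DecidableEq n]
    (A : Matrix m m ℂ) (B : Matrix n n ℂ) : (A ⊗ₖ B)ᴴ = Aᴴ ⊗ₖ Bᴴ := by
  ext ⟨i, j⟩ ⟨k, l⟩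
  simp [Matrix.conjTranspose_apply, kroneckerMap_apply]

lemma kron_conj (U : M2) (V : M3) (A : M2) (B : M3) :
    (U ⊗ₖ V) * (A ⊗ₖ B) * (U ⊗ₖ V)ᴴ = (U * A * Uᴴ) ⊗ₖ (V * B * Vᴴ) := by
  rw [kron_ct, Matrix.mul_kronecker_mul, Matrix.mul_kronecker_mul]

lemma Obs0_conj (U : M2) (V : M3) (hU : U ∈ Matrix.unitaryGroup (Fin 2) ℂ)
    (hV : V ∈ Matrix.unitaryGroup (Fin 3) ℂ) :
    Obs0 U V = (U ⊗ₖ V) * Obs0 1 1 * (U ⊗ₖ V)ᴴ := by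
  have hU1 : U * Uᴴ = 1 := Matrix.UnitaryGroup.star_mul_self ⟨U, hU⟩ ▸ (Matrix.mem_unitaryGroup_iff.mp hU)
  have hV1 : V * Vᴴ = 1 := Matrix.mem_unitaryGroup_iff.mp hV
  simp only [Obs0, Matrix.mul_add, Matrix.add_mul, Matrix.mul_sub, Matrix.sub_mul,
    Matrix.mul_smul, Matrix.smul_mul, kron_conj, OA_one, OB_one, OA, OB,
    Matrix.mul_one, Matrix.one_mul, hU1, hV1, Matrix.conjTranspose_one]

lemma Obs1_conj (U : M2) (V : M3) (hU : U ∈ Matrix.unitaryGroup (Fin 2) ℂ)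
    (hV : V ∈ Matrix.unitaryGroup (Fin 3) ℂ) :
    Obs1 U V = (U ⊗ₖ V) * Obs1 1 1 * (U ⊗ₖ V)ᴴ := by
  have hU1 : U * Uᴴ = 1 := Matrix.mem_unitaryGroup_iff.mp hU
  have hV1 : V * Vᴴ = 1 := Matrix.mem_unitaryGroup_iff.mp hV
  simp only [Obs1, Matrix.mul_add, Matrix.add_mul, Matrix.mul_sub, Matrix.sub_mul,
    Matrix.mul_smul, Matrix.smul_mul, kron_conj, OA_one, OB_one, OA, OB,
    Matrix.mul_one, Matrix.one_mul, hU1, hV1, Matrix.conjTranspose_one]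

lemma Obs2_conj (U : M2) (V : M3) (hU : U ∈ Matrix.unitaryGroup (Fin 2) ℂ)
    (hV : V ∈ Matrix.unitaryGroup (Fin 3) ℂ) :
    Obs2 U V = (U ⊗ₖ V) * Obs2 1 1 * (U ⊗ₖ V)ᴴ := by
  simp only [Obs2, Matrix.mul_add, Matrix.add_mul, Matrix.mul_smul, Matrix.smul_mul,
    kron_conj, OA_one, OB_one, OA, OB, Matrix.mul_one, Matrix.one_mul,
    Matrix.conjTranspose_one]

set_option maxHeartbeats 1000000 in
lemma rot (U : M2) (V : M3) (a b : ℝ) :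
    PT (proj (fun p => (a:ℂ) * star (U p.1 0) * V p.2 0 + (b:ℂ) * star (U p.1 1) * V p.2 1))
      = (U ⊗ₖ V) * W0 a b * (U ⊗ₖ V)ᴴ := by
  ext ⟨i, j⟩ ⟨k, l⟩
  simp only [PT, proj, Matrix.vecMulVec_apply, Pi.star_apply, Matrix.mul_apply,
    Matrix.conjTranspose_apply, kroneckerMap_apply, W0, Matrix.add_apply, Matrix.smul_apply,
    Matrix.single, Matrix.of_apply, Fintype.sum_prod_type, Fin.sum_univ_succ,
    Fin.sum_univ_zero, smul_eq_mul, star_add, StarMul.star_mul, star_star, RCLike.star_def,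
    Complex.conj_ofReal, Prod.mk.injEq]
  norm_num [Fin.ext_iff]
  ring

lemma PT_herm (ρ : M6) (h : ρ.IsHermitian) : (PT ρ).IsHermitian := by
  ext p q
  rw [Matrix.conjTranspose_apply]
  show star (PT ρ q p) = PT ρ p q
  unfold PT
  exact h.apply _ _

def swapE : ((Fin 2 × Fin 3) × (Fin 2 × Fin 3)) ≃ ((Fin 2 × Fin 3) × (Fin 2 × Fin 3)) where
  toFun z := ((z.2.1, z.1.2), (z.1.1, z.2.2))
  invFun z := ((z.2.1, z.1.2), (z.1.1, z.2.2))
  left_inv z := rfl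
  right_inv z := rfl

lemma quad_eq_trace (ρ : M6) (x : Fin 2 × Fin 3 → ℂ) :
    dotProduct (star x) ((PT ρ) *ᵥ x) = (ρ * PT (proj x)).trace := by
  have hL : dotProduct (star x) ((PT ρ) *ᵥ x)
      = ∑ z : (Fin 2 × Fin 3) × (Fin 2 × Fin 3),
          star (x z.1) * (ρ (z.2.1, z.1.2) (z.1.1, z.2.2) * x z.2) := by
    simp [dotProduct, Matrix.mulVec, PT, Finset.mul_sum, mul_add,
      ← Finset.univ_product_univ, Finset.sum_product]
  have hR : (ρ * PT (proj x)).trace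
      = ∑ z : (Fin 2 × Fin 3) × (Fin 2 × Fin 3),
          ρ z.1 z.2 * (x (z.1.1, z.2.2) * star (x (z.2.1, z.1.2))) := by
    simp [Matrix.trace, Matrix.diag, Matrix.mul_apply, PT, proj, Matrix.vecMulVec_apply,
      ← Finset.univ_product_univ, Finset.sum_product]
  rw [hL, hR, ← Equiv.sum_comp swapE
    (fun z => ρ z.1 z.2 * (x (z.1.1, z.2.2) * star (x (z.2.1, z.1.2))))]
  refine Finset.sum_congr rfl fun z _ => ?_
  simp only [swapE, Equiv.coe_fn_mk]
  ring

set_option maxHeartbeats 1000000 in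
lemma schmidt (x : Fin 2 × Fin 3 → ℂ) :
    ∃ (U : M2) (V : M3) (a b : ℝ), U ∈ Matrix.unitaryGroup (Fin 2) ℂ ∧
      V ∈ Matrix.unitaryGroup (Fin 3) ℂ ∧ 0 ≤ a ∧ 0 ≤ b ∧
      ∀ p, x p = (a:ℂ) * star (U p.1 0) * V p.2 0 + (b:ℂ) * star (U p.1 1) * V p.2 1 := by
  classical
  set C : Matrix (Fin 2) (Fin 3) ℂ := Matrix.of (fun i j => x (i, j)) with hC
  have hM : (C * Cᴴ).PosSemidef := Matrix.posSemidef_self_mul_conjTranspose C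
  have hHerm : (C * Cᴴ).IsHermitian := hM.1
  set U0 : M2 := (hHerm.eigenvectorUnitary : M2) with hU0
  have hU0mem : U0 ∈ Matrix.unitaryGroup (Fin 2) ℂ := hHerm.eigenvectorUnitary.2
  have hU0a : U0 * U0ᴴ = 1 := by
    simpa [Matrix.star_eq_conjTranspose] using Matrix.mem_unitaryGroup_iff.mp hU0mem
  have hU0b : U0ᴴ * U0 = 1 := by
    simpa [Matrix.star_eq_conjTranspose] using Matrix.mem_unitaryGroup_iff'.mp hU0mem
  set ev : Fin 2 → ℝ := hHerm.eigenvalues with hev_def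
  have hev : ∀ k, 0 ≤ ev k := fun k => hM.eigenvalues_nonneg k
  set D : Matrix (Fin 2) (Fin 3) ℂ := U0ᴴ * C with hD
  have hDD : D * Dᴴ = Matrix.diagonal (fun k => (ev k : ℂ)) := by
    have h1 : star (hHerm.eigenvectorUnitary : M2) * (C * Cᴴ) * (hHerm.eigenvectorUnitary : M2)
        = Matrix.diagonal (RCLike.ofReal ∘ hHerm.eigenvalues) := by
      have := hHerm.conjStarAlgAut_star_eigenvectorUnitary
      rwa [Unitary.conjStarAlgAut_star_apply] at this
    have : D * Dᴴ = U0ᴴ * (C * Cᴴ) * U0 := by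
      rw [hD, Matrix.conjTranspose_mul, Matrix.conjTranspose_conjTranspose]
      rw [Matrix.mul_assoc, Matrix.mul_assoc, Matrix.mul_assoc]
    rw [this]
    rw [← Matrix.star_eq_conjTranspose]
    exact h1
  have hrow : ∀ k l, ∑ j, D k j * star (D l j) = if k = l then (ev k : ℂ) else 0 := by
    intro k l
    have := congrFun (congrFun hDD k) l
    simpa [Matrix.mul_apply, Matrix.conjTranspose_apply, Matrix.diagonal_apply] using this
  have hrow' : ∀ k l, ∑ j, star (D k j) * D l j = if k = l then (ev k : ℂ) else 0 := by
    intro k l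
    have h1 : ∑ j, star (D k j) * D l j = star (∑ j, D k j * star (D l j)) := by
      rw [star_sum]
      exact Finset.sum_congr rfl fun j _ => by rw [star_mul', star_star, mul_comm]
    rw [h1, hrow k l]
    by_cases hkl : k = l <;> simp [hkl]
  have hzero : ∀ k, ev k = 0 → ∀ j, D k j = 0 := by
    intro k hk j
    have h1 : ∑ j, Complex.normSq (D k j) = 0 := by
      have := hrow k k
      rw [if_pos rfl, hk] at this
      have h2 : ((∑ j, Complex.normSq (D k j) : ℝ) : ℂ) = 0 := by
        push_cast
        simpa [Complex.mul_conj] using this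
      exact_mod_cast h2
    have := (Finset.sum_eq_zero_iff_of_nonneg (fun i _ => Complex.normSq_nonneg (D k i))).mp h1
    exact Complex.normSq_eq_zero.mp (this j (Finset.mem_univ j))
  set d : Fin 2 → ℝ := fun k => Real.sqrt (ev k) with hd
  have hd_nonneg : ∀ k, 0 ≤ d k := fun k => Real.sqrt_nonneg _
  have hd_sq : ∀ k, d k * d k = ev k := fun k => Real.mul_self_sqrt (hev k)
  -- the candidate orthonormal rows
  set v : Fin 3 → EuclideanSpace ℂ (Fin 3) :=
    fun k => if h : (k : ℕ) < 2 then WithLp.toLp 2 (((d ⟨k, h⟩ : ℂ))⁻¹ • (fun j => D ⟨k, h⟩ j)) else 0 with hv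
  set s : Set (Fin 3) := {k | ∃ h : (k : ℕ) < 2, ev ⟨k, h⟩ ≠ 0} with hs
  have hvon : Orthonormal ℂ (s.restrict v) := by
    rw [orthonormal_iff_ite]
    rintro ⟨k, hk2, hkev⟩ ⟨l, hl2, hlev⟩
    have hdk : d ⟨k, hk2⟩ ≠ 0 := by
      simp only [hd]
      exact Real.sqrt_ne_zero'.mpr (lt_of_le_of_ne (hev _) (Ne.symm hkev))
    have hdl : d ⟨l, hl2⟩ ≠ 0 := by
      simp only [hd]
      exact Real.sqrt_ne_zero'.mpr (lt_of_le_of_ne (hev _) (Ne.symm hlev))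
    have key : (inner ℂ (v k) (v l) : ℂ)
        = ((d ⟨k, hk2⟩ : ℂ))⁻¹ * (((d ⟨l, hl2⟩ : ℂ))⁻¹
            * (if (⟨k, hk2⟩ : Fin 2) = ⟨l, hl2⟩ then (ev ⟨k, hk2⟩ : ℂ) else 0)) := by
      simp only [hv]
      rw [dif_pos hk2, dif_pos hl2, WithLp.toLp_smul, WithLp.toLp_smul, inner_smul_left, inner_smul_right, PiLp.inner_apply]
      simp only [RCLike.inner_apply, ← Complex.star_def, PiLp.toLp_apply]
      rw [show (∑ j, D ⟨l, hl2⟩ j * star (D ⟨k, hk2⟩ j)) = ∑ j, star (D ⟨k, hk2⟩ j) * D ⟨l, hl2⟩ j from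
        Finset.sum_congr rfl fun j _ => mul_comm _ _]
      rw [hrow' ⟨k, hk2⟩ ⟨l, hl2⟩]
      simp [Complex.conj_ofReal]
    show (inner ℂ (v k) (v l) : ℂ) = _
    rw [key]
    by_cases hkl : k = l
    · subst hkl
      rw [if_pos rfl, if_pos rfl]
      have : ((d ⟨k, hk2⟩ : ℝ) : ℂ) ≠ 0 := Complex.ofReal_ne_zero.mpr hdk
      rw [← hd_sq ⟨k, hk2⟩]
      push_cast
      field_simp
    · have h2 : ¬((⟨k, hk2⟩ : Fin 2) = ⟨l, hl2⟩) := by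
        intro hcon
        exact hkl (Fin.ext (by simpa using Fin.mk.inj_iff.mp hcon))
      rw [if_neg h2, if_neg (by simp [Subtype.ext_iff, hkl]), mul_zero, mul_zero]
  obtain ⟨B, hB⟩ := hvon.exists_orthonormalBasis_extension_of_card_eq (by simp)
  set V : M3 := Matrix.of (fun j k => B k j) with hV
  have hVmem : V ∈ Matrix.unitaryGroup (Fin 3) ℂ := by
    rw [Matrix.mem_unitaryGroup_iff']
    ext k l
    have hO := (orthonormal_iff_ite.mp B.orthonormal) k l
    rw [PiLp.inner_apply] at hO
    simp only [RCLike.inner_apply] at hO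
    simp only [Matrix.mul_apply, Matrix.star_apply, hV, Matrix.of_apply, Matrix.one_apply]
    convert hO using 2
    exact mul_comm _ _
  have hcol : ∀ (k2 : Fin 2) (k3 : Fin 3), (k3 : ℕ) = (k2 : ℕ) →
      ∀ j, D k2 j = (d k2 : ℂ) * V j k3 := by
    intro k2 k3 hkk j
    have hk32 : (k3 : ℕ) < 2 := by omega
    have hmk : (⟨(k3 : ℕ), hk32⟩ : Fin 2) = k2 := Fin.ext (by simpa using hkk)
    by_cases hz : ev k2 = 0
    · rw [hzero k2 hz j]
      have : d k2 = 0 := by simp [hd, hz]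
      simp [this]
    · have hk3s : k3 ∈ s := ⟨hk32, by rw [hmk]; exact hz⟩
      have hBk : B k3 = v k3 := hB k3 hk3s
      have hdk : d k2 ≠ 0 := Real.sqrt_ne_zero'.mpr (lt_of_le_of_ne (hev _) (Ne.symm hz))
      have hVjk : V j k3 = ((d k2 : ℝ) : ℂ)⁻¹ * D k2 j := by
        rw [hV]
        show B k3 j = _
        rw [hBk, hv]
        simp only [dif_pos hk32, hmk]
        rfl
      rw [hVjk]
      have : ((d k2 : ℝ) : ℂ) ≠ 0 := Complex.ofReal_ne_zero.mpr hdk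
      field_simp
  refine ⟨U0.map star, V, d 0, d 1, ?_, hVmem, hd_nonneg 0, hd_nonneg 1, ?_⟩
  · rw [Matrix.mem_unitaryGroup_iff']
    have hmap : star (U0.map star) * (U0.map star) = (U0ᴴ * U0)ᵀ := by
      ext k l
      simp only [Matrix.mul_apply, Matrix.star_apply, Matrix.map_apply, star_star,
        Matrix.transpose_apply, Matrix.conjTranspose_apply]
      exact Finset.sum_congr rfl fun i _ => mul_comm _ _
    rw [hmap, hU0b, Matrix.transpose_one]
  · rintro ⟨i, j⟩
    have hCU : C = U0 * D := by rw [hD, ← Matrix.mul_assoc, hU0a, Matrix.one_mul]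
    have hx : x (i, j) = (U0 * D) i j := by rw [← hCU]; rfl
    show x (i, j) = _
    rw [hx, Matrix.mul_apply, Fin.sum_univ_two, hcol 0 0 rfl j, hcol 1 1 rfl j]
    simp only [Matrix.map_apply, star_star]
    ring

theorem stmt_9 (ρ : M6) (hpsd : ρ.PosSemidef) (htr : ρ.trace = 1)
    (h : ∀ (U : M2) (V : M3), U ∈ Matrix.unitaryGroup (Fin 2) ℂ →
        V ∈ Matrix.unitaryGroup (Fin 3) ℂ →
        Real.sqrt ((expval ρ (Obs1 U V))^2 + 9 * (expval ρ (Obs2 U V))^2)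
          ≤ expval ρ (Obs0 U V)) :
    (PT ρ).PosSemidef := by
  have hherm : (PT ρ).IsHermitian := PT_herm ρ hpsd.1
  refine Matrix.PosSemidef.of_dotProduct_mulVec_nonneg hherm fun x => ?_
  obtain ⟨U, V, a, b, hU, hV, ha, hb, hx⟩ := schmidt x
  have hxeq : x = fun p => (a:ℂ) * star (U p.1 0) * V p.2 0 + (b:ℂ) * star (U p.1 1) * V p.2 1 :=
    funext hx
  set T : ℂ := dotProduct (star x) ((PT ρ) *ᵥ x) with hT
  have hTstar : star T = T := by
    calc star T = star (PT ρ *ᵥ x) ⬝ᵥ x := by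
          rw [hT, Matrix.star_dotProduct, star_star]
      _ = (star x ᵥ* (PT ρ)ᴴ) ⬝ᵥ x := by rw [Matrix.star_mulVec]
      _ = star x ⬝ᵥ ((PT ρ)ᴴ *ᵥ x) := by rw [← dotProduct_mulVec]
      _ = T := by rw [hherm.eq, hT]
  have hTim : T.im = 0 := Complex.conj_eq_iff_im.mp hTstar
  -- the key trace identity
  have h12 : (12:ℂ) • PT (proj x)
      = ((a:ℂ)^2+(b:ℂ)^2) • Obs0 U V + ((a:ℂ)^2-(b:ℂ)^2) • Obs1 U V
        + (6*(a:ℂ)*(b:ℂ)) • Obs2 U V := by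
    rw [hxeq, rot U V a b, Obs0_conj U V hU hV, Obs1_conj U V hU hV, Obs2_conj U V hU hV,
      ← Matrix.smul_mul, ← Matrix.mul_smul, base12]
    simp only [Matrix.add_mul, Matrix.mul_add, Matrix.smul_mul, Matrix.mul_smul]
  have hkey : (12:ℂ) * T = ((a:ℂ)^2+(b:ℂ)^2) * (ρ * Obs0 U V).trace
      + ((a:ℂ)^2-(b:ℂ)^2) * (ρ * Obs1 U V).trace
      + (6*(a:ℂ)*(b:ℂ)) * (ρ * Obs2 U V).trace := by
    calc (12:ℂ) * T = (ρ * ((12:ℂ) • PT (proj x))).trace := by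
          rw [Matrix.mul_smul, Matrix.trace_smul, smul_eq_mul, hT, quad_eq_trace]
      _ = _ := by rw [h12]; simp only [Matrix.mul_add, Matrix.trace_add, Matrix.mul_smul,
            Matrix.trace_smul, smul_eq_mul]
  -- real part
  set E0 := expval ρ (Obs0 U V) with hE0
  set E1 := expval ρ (Obs1 U V) with hE1
  set E2 := expval ρ (Obs2 U V) with hE2
  have hre : 12 * T.re = (a^2+b^2) * E0 + (a^2-b^2) * E1 + (6*a*b) * E2 := by
    have := congrArg Complex.re hkey
    rw [show ((a:ℂ)^2+(b:ℂ)^2) = ((a^2+b^2 : ℝ) : ℂ) by push_cast; ring,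
      show ((a:ℂ)^2-(b:ℂ)^2) = ((a^2-b^2 : ℝ) : ℂ) by push_cast; ring,
      show (6*(a:ℂ)*(b:ℂ)) = ((6*a*b : ℝ) : ℂ) by push_cast; ring,
      show (12:ℂ) = ((12:ℝ) : ℂ) by norm_num] at this
    simp only [Complex.add_re, Complex.re_ofReal_mul] at this
    exact this
  -- the inequality
  have hineq := h U V hU hV
  rw [← hE0, ← hE1, ← hE2] at hineq
  have hs0 : (0:ℝ) ≤ E1^2 + 9*E2^2 := by positivity
  have hsq := Real.sq_sqrt hs0
  have hsnn := Real.sqrt_nonneg (E1^2 + 9*E2^2)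
  set sq := Real.sqrt (E1^2 + 9*E2^2) with hsqdef
  have hsq2 : ((a^2+b^2)*sq)^2 = (a^2+b^2)^2*(E1^2 + 9*E2^2) := by rw [mul_pow, hsq]
  have hcs : ((a^2-b^2)*E1 + 6*a*b*E2)^2 ≤ ((a^2+b^2)*sq)^2 := by
    nlinarith [sq_nonneg (2*a*b*E1 - 3*(a^2-b^2)*E2), hsq2]
  have hns : 0 ≤ (a^2+b^2)*sq := by positivity
  have habs : |(a^2-b^2)*E1 + 6*a*b*E2| ≤ (a^2+b^2)*sq := by
    rw [← Real.sqrt_sq_eq_abs]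
    calc Real.sqrt (((a^2-b^2)*E1 + 6*a*b*E2)^2) ≤ Real.sqrt (((a^2+b^2)*sq)^2) :=
          Real.sqrt_le_sqrt hcs
      _ = (a^2+b^2)*sq := Real.sqrt_sq hns
  have hstep : 0 ≤ (a^2+b^2)*sq + ((a^2-b^2)*E1 + 6*a*b*E2) := by
    have := neg_abs_le ((a^2-b^2)*E1 + 6*a*b*E2)
    linarith
  have hE0ge : (a^2+b^2)*sq ≤ (a^2+b^2)*E0 :=
    mul_le_mul_of_nonneg_left hineq (by positivity)
  have hTre : 0 ≤ T.re := by nlinarith [hre, hstep, hE0ge]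
  rw [Complex.le_def]
  constructor
  · simpa using hTre
  · simp [hTim]
end
end

section
/- Let $\rho$ be a density matrix on $\mathbb{C}^2\otimes\mathbb{C}^3$ that is separable, i.e., a finite convex combination $\rho = \sum_i p_i |\xi_i\rangle\langle\xi_i|$ of product pure states $|\xi_i\rangle = |u_i\rangle\otimes|v_i\rangle$. Then for all $2\times 2$ unitaries $U$ and $3\times 3$ unitaries $V$, with $A_i = U\sigma_iU^\dagger$ and $B_j = V\lambda_jV^\dagger$, one has $\langle 2I_2\otimes I_3 - I_2\otimes B_1 + 2I_2\otimes B_2 + 3A_3\otimes B_1\rangle_\rho \geq \big(\langle 3I_2\otimes B_1 + 2A_3\otimes I_3 - A_3\otimes B_1 + 2A_3\otimes B_2\rangle_\rho^2 + 9\langle A_1\otimes B_3 + A_2\otimes B_4\rangle_\rho^2\big)^{1/2}$. -/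
open Matrix Kronecker
open scoped ComplexOrder

noncomputable section

/-! For a product vector write `a = U† u` and `b = V† v`. Then `⟨Obs0⟩ = 6 (s + t)` and
`⟨Obs1⟩ = 6 (s - t)` with `s = |a₀ b₀|²`, `t = |a₁ b₁|²`, while `⟨Obs2⟩ = 4 Re (ā₀ a₁ b₀ b̄₁)`.
Since `a ⊗ b` is a product vector, `|a₀ b₁ · a₁ b₀| = |a₀ b₀ · a₁ b₁|`, so `⟨Obs2⟩² ≤ 16 s t` and
`⟨Obs1⟩² + 9 ⟨Obs2⟩² ≤ ⟨Obs0⟩²` on product states. The three expectations are linear in `ρ`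
and `(x, y) ↦ √(x² + 9 y²)` is a norm on `ℝ²`, so the triangle inequality carries the bound over
to convex combinations. -/

section PureState

variable {n : Type} [Fintype n]

lemma trace_proj_mul (ψ : n → ℂ) (M : Matrix n n ℂ) :
    (proj ψ * M).trace = star ψ ⬝ᵥ (M *ᵥ ψ) := by
  rw [proj, vecMulVec_mul, trace_vecMulVec, dotProduct_comm, dotProduct_mulVec]

lemma star_dotProduct_mul_mul_conjTranspose_mulVec [DecidableEq n] (W M : Matrix n n ℂ)
    (ψ : n → ℂ) :
    star ψ ⬝ᵥ ((W * M * Wᴴ) *ᵥ ψ) = star (Wᴴ *ᵥ ψ) ⬝ᵥ (M *ᵥ (Wᴴ *ᵥ ψ)) := by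
  rw [← mulVec_mulVec, ← mulVec_mulVec, dotProduct_mulVec, star_mulVec,
    conjTranspose_conjTranspose]

lemma sum_norm_sq_conjTranspose_mulVec [DecidableEq n] {W : Matrix n n ℂ}
    (hW : W ∈ unitaryGroup n ℂ) {ψ : n → ℂ} (hψ : star ψ ⬝ᵥ ψ = 1) :
    ∑ i, ‖(Wᴴ *ᵥ ψ) i‖ ^ 2 = 1 := by
  have h : star (Wᴴ *ᵥ ψ) ⬝ᵥ (Wᴴ *ᵥ ψ) = 1 := by
    rw [star_mulVec, conjTranspose_conjTranspose, dotProduct_mulVec, vecMul_vecMul,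
      ← star_eq_conjTranspose, mem_unitaryGroup_iff.mp hW, vecMul_one, hψ]
  simpa [dotProduct, Complex.conj_mul', ← Complex.ofReal_pow] using congrArg Complex.re h

lemma star_dotProduct_single_mulVec [DecidableEq n] (ψ : n → ℂ) (i j : n) (c : ℂ) :
    star ψ ⬝ᵥ (single i j c *ᵥ ψ) = c * (star (ψ i) * ψ j) := by
  rw [single_mulVec_eq, dotProduct_smul, dotProduct_single_one, smul_eq_mul, Pi.star_apply]
  ring

lemma star_dotProduct_single_sub_single_mulVec [DecidableEq n] (ψ : n → ℂ) (i j : n) :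
    star ψ ⬝ᵥ ((single i i 1 - single j j 1) *ᵥ ψ) = ((‖ψ i‖ ^ 2 - ‖ψ j‖ ^ 2 : ℝ) : ℂ) := by
  simp only [sub_mulVec, dotProduct_sub, star_dotProduct_single_mulVec, Complex.star_def,
    Complex.conj_mul']
  push_cast
  ring

lemma star_dotProduct_single_add_single_mulVec [DecidableEq n] (ψ : n → ℂ) (i j : n) :
    star ψ ⬝ᵥ ((single i j 1 + single j i 1) *ᵥ ψ) = ((2 * (star (ψ i) * ψ j).re : ℝ) : ℂ) := by
  rw [← Complex.add_conj, add_mulVec, dotProduct_add, star_dotProduct_single_mulVec,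
    star_dotProduct_single_mulVec]
  simp [mul_comm]

lemma star_dotProduct_I_smul_single_sub_single_mulVec [DecidableEq n] (ψ : n → ℂ) (i j : n) :
    star ψ ⬝ᵥ ((Complex.I • single i j 1 - Complex.I • single j i 1) *ᵥ ψ) =
      ((-2 * (star (ψ i) * ψ j).im : ℝ) : ℂ) := by
  have h := Complex.sub_conj (star (ψ i) * ψ j)
  rw [← Complex.star_def, star_mul', star_star, mul_comm (ψ i)] at h
  rw [sub_mulVec, dotProduct_sub, smul_single, smul_single, star_dotProduct_single_mulVec,
    star_dotProduct_single_mulVec, smul_eq_mul, mul_one, ← mul_sub, h]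
  push_cast
  linear_combination (2 * (star (ψ i) * ψ j).im) * Complex.I_sq

end PureState

lemma trace_proj_kronecker_mul {m n : Type} [Fintype m] [Fintype n] (u : m → ℂ) (v : n → ℂ)
    (A : Matrix m m ℂ) (B : Matrix n n ℂ) :
    ((proj u ⊗ₖ proj v) * (A ⊗ₖ B)).trace = (star u ⬝ᵥ (A *ᵥ u)) * (star v ⬝ᵥ (B *ᵥ v)) := by
  rw [← mul_kronecker_mul, trace_kronecker, trace_proj_mul, trace_proj_mul]

lemma expval_sum_ofReal_smul {m : Type} [Fintype m] {ι : Type*} (s : Finset ι) (p : ι → ℝ)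
    (σ : ι → Matrix m m ℂ) (M : Matrix m m ℂ) :
    expval (∑ i ∈ s, (p i : ℂ) • σ i) M = ∑ i ∈ s, p i * expval (σ i) M := by
  rw [expval, Finset.sum_mul, trace_sum, Complex.re_sum]
  refine Finset.sum_congr rfl fun i _ => ?_
  rw [smul_mul_assoc, trace_smul, smul_eq_mul, Complex.re_ofReal_mul, expval]

lemma expval_Obs0_proj_kronecker {U : M2} {V : M3}
    (hU : U ∈ unitaryGroup (Fin 2) ℂ) (hV : V ∈ unitaryGroup (Fin 3) ℂ)
    {u : Fin 2 → ℂ} {v : Fin 3 → ℂ} (hu : star u ⬝ᵥ u = 1) (hv : star v ⬝ᵥ v = 1) :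
    expval (proj u ⊗ₖ proj v) (Obs0 U V) =
      6 * (‖(Uᴴ *ᵥ u) 0‖ ^ 2 * ‖(Vᴴ *ᵥ v) 0‖ ^ 2 + ‖(Uᴴ *ᵥ u) 1‖ ^ 2 * ‖(Vᴴ *ᵥ v) 1‖ ^ 2) := by
  have ha := sum_norm_sq_conjTranspose_mulVec hU hu
  have hb := sum_norm_sq_conjTranspose_mulVec hV hv
  rw [Fin.sum_univ_two] at ha
  rw [Fin.sum_univ_three] at hb
  simp only [expval, Obs0, OA, OB, Matrix.mul_add, Matrix.mul_sub, Matrix.mul_smul, trace_add,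
    trace_sub, trace_smul, smul_eq_mul, trace_proj_kronecker_mul,
    star_dotProduct_mul_mul_conjTranspose_mulVec, one_mulVec, hu, hv, Matrix.cons_val]
  simp only [sig3, lam1, lam2, star_dotProduct_single_sub_single_mulVec]
  norm_cast
  linear_combination (-3 * (‖(Vᴴ *ᵥ v) 0‖ ^ 2 + ‖(Vᴴ *ᵥ v) 1‖ ^ 2)) * ha - 2 * hb

lemma expval_Obs1_proj_kronecker {U : M2} {V : M3}
    (hU : U ∈ unitaryGroup (Fin 2) ℂ) (hV : V ∈ unitaryGroup (Fin 3) ℂ)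
    {u : Fin 2 → ℂ} {v : Fin 3 → ℂ} (hu : star u ⬝ᵥ u = 1) (hv : star v ⬝ᵥ v = 1) :
    expval (proj u ⊗ₖ proj v) (Obs1 U V) =
      6 * (‖(Uᴴ *ᵥ u) 0‖ ^ 2 * ‖(Vᴴ *ᵥ v) 0‖ ^ 2 - ‖(Uᴴ *ᵥ u) 1‖ ^ 2 * ‖(Vᴴ *ᵥ v) 1‖ ^ 2) := by
  have ha := sum_norm_sq_conjTranspose_mulVec hU hu
  have hb := sum_norm_sq_conjTranspose_mulVec hV hv
  rw [Fin.sum_univ_two] at ha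
  rw [Fin.sum_univ_three] at hb
  simp only [expval, Obs1, OA, OB, Matrix.mul_add, Matrix.mul_sub, Matrix.mul_smul, trace_add,
    trace_sub, trace_smul, smul_eq_mul, trace_proj_kronecker_mul,
    star_dotProduct_mul_mul_conjTranspose_mulVec, one_mulVec, hu, hv, Matrix.cons_val]
  simp only [sig3, lam1, lam2, star_dotProduct_single_sub_single_mulVec]
  norm_cast
  linear_combination (3 * (‖(Vᴴ *ᵥ v) 1‖ ^ 2 - ‖(Vᴴ *ᵥ v) 0‖ ^ 2)) * ha
    - 2 * (‖(Uᴴ *ᵥ u) 0‖ ^ 2 - ‖(Uᴴ *ᵥ u) 1‖ ^ 2) * hb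

lemma expval_Obs2_proj_kronecker (U : M2) (V : M3) (u : Fin 2 → ℂ) (v : Fin 3 → ℂ) :
    expval (proj u ⊗ₖ proj v) (Obs2 U V) =
      4 * (star ((Uᴴ *ᵥ u) 0) * (Uᴴ *ᵥ u) 1 * star (star ((Vᴴ *ᵥ v) 0) * (Vᴴ *ᵥ v) 1)).re := by
  simp only [expval, Obs2, OA, OB, Matrix.mul_add, trace_add, trace_proj_kronecker_mul,
    star_dotProduct_mul_mul_conjTranspose_mulVec, Matrix.cons_val]
  simp only [sig1, sig2, lam3, lam4, star_dotProduct_single_add_single_mulVec,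
    star_dotProduct_I_smul_single_sub_single_mulVec]
  rw [← Complex.ofReal_mul, ← Complex.ofReal_mul, ← Complex.ofReal_add, Complex.ofReal_re]
  simp only [Complex.mul_re, Complex.star_def, Complex.conj_re, Complex.conj_im]
  ring

lemma sqrt_expval_Obs_le_expval_Obs0_proj_kronecker {U : M2} {V : M3}
    (hU : U ∈ unitaryGroup (Fin 2) ℂ) (hV : V ∈ unitaryGroup (Fin 3) ℂ)
    {u : Fin 2 → ℂ} {v : Fin 3 → ℂ} (hu : star u ⬝ᵥ u = 1) (hv : star v ⬝ᵥ v = 1) :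
    √(expval (proj u ⊗ₖ proj v) (Obs1 U V) ^ 2 + 9 * expval (proj u ⊗ₖ proj v) (Obs2 U V) ^ 2)
      ≤ expval (proj u ⊗ₖ proj v) (Obs0 U V) := by
  rw [expval_Obs0_proj_kronecker hU hV hu hv, expval_Obs1_proj_kronecker hU hV hu hv,
    expval_Obs2_proj_kronecker]
  set a := Uᴴ *ᵥ u
  set b := Vᴴ *ᵥ v
  have hcoh : (star (a 0) * a 1 * star (star (b 0) * b 1)).re ^ 2
      ≤ (‖a 0‖ ^ 2 * ‖b 0‖ ^ 2) * (‖a 1‖ ^ 2 * ‖b 1‖ ^ 2) := by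
    calc _ ≤ ‖star (a 0) * a 1 * star (star (b 0) * b 1)‖ ^ 2 := by
          rw [← sq_abs]; exact pow_le_pow_left₀ (abs_nonneg _) (Complex.abs_re_le_norm _) 2
      _ = _ := by simp only [norm_mul, norm_star]; ring
  rw [Real.sqrt_le_left (by positivity)]
  linear_combination 144 * hcoh

lemma sqrt_sq_add_mul_sq_sum_le {ι : Type*} (s : Finset ι) {p : ι → ℝ} (hp : ∀ i ∈ s, 0 ≤ p i)
    (x y : ι → ℝ) {k : ℝ} (hk : 0 ≤ k) :
    √((∑ i ∈ s, p i * x i) ^ 2 + k * (∑ i ∈ s, p i * y i) ^ 2)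
      ≤ ∑ i ∈ s, p i * √(x i ^ 2 + k * y i ^ 2) := by
  have hnorm (a b : ℝ) : ‖(⟨a, √k * b⟩ : ℂ)‖ = √(a ^ 2 + k * b ^ 2) := by
    rw [Complex.norm_def, Complex.normSq_mk, mul_mul_mul_comm, Real.mul_self_sqrt hk]
    ring_nf
  have hsum : ∑ i ∈ s, p i • (⟨x i, √k * y i⟩ : ℂ)
      = ⟨∑ i ∈ s, p i * x i, √k * ∑ i ∈ s, p i * y i⟩ := by
    apply Complex.ext <;> simp [Complex.re_sum, Complex.im_sum, Finset.mul_sum, mul_left_comm]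
  calc √((∑ i ∈ s, p i * x i) ^ 2 + k * (∑ i ∈ s, p i * y i) ^ 2)
      = ‖∑ i ∈ s, p i • (⟨x i, √k * y i⟩ : ℂ)‖ := by rw [hsum, hnorm]
    _ ≤ ∑ i ∈ s, ‖p i • (⟨x i, √k * y i⟩ : ℂ)‖ := norm_sum_le _ _
    _ = ∑ i ∈ s, p i * √(x i ^ 2 + k * y i ^ 2) := Finset.sum_congr rfl fun i hi => by
      rw [norm_smul, Real.norm_of_nonneg (hp i hi), hnorm]

theorem stmt_10_general (ρ : M6) (n : ℕ) (p : Fin n → ℝ) (u : Fin n → (Fin 2 → ℂ))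
    (v : Fin n → (Fin 3 → ℂ))
    (hp0 : ∀ i, 0 ≤ p i)
    (hu : ∀ i, star (u i) ⬝ᵥ u i = 1) (hv : ∀ i, star (v i) ⬝ᵥ v i = 1)
    (hρ : ρ = ∑ i, ((p i : ℝ) : ℂ) • (proj (u i) ⊗ₖ proj (v i)))
    (U : M2) (hU : U ∈ Matrix.unitaryGroup (Fin 2) ℂ)
    (V : M3) (hV : V ∈ Matrix.unitaryGroup (Fin 3) ℂ) :
    Real.sqrt ((expval ρ (Obs1 U V))^2 + 9 * (expval ρ (Obs2 U V))^2)
      ≤ expval ρ (Obs0 U V) := by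
  subst hρ
  simp only [expval_sum_ofReal_smul]
  calc _ ≤ ∑ i, p i * √(expval (proj (u i) ⊗ₖ proj (v i)) (Obs1 U V) ^ 2
          + 9 * expval (proj (u i) ⊗ₖ proj (v i)) (Obs2 U V) ^ 2) :=
        sqrt_sq_add_mul_sq_sum_le _ (fun i _ => hp0 i) _ _ (by norm_num)
    _ ≤ _ := Finset.sum_le_sum fun i _ => mul_le_mul_of_nonneg_left
        (sqrt_expval_Obs_le_expval_Obs0_proj_kronecker hU hV (hu i) (hv i)) (hp0 i)

theorem stmt_10 (ρ : M6) (n : ℕ) (p : Fin n → ℝ) (u : Fin n → (Fin 2 → ℂ))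
    (v : Fin n → (Fin 3 → ℂ))
    (hp0 : ∀ i, 0 ≤ p i) (hp1 : ∑ i, p i = 1)
    (hu : ∀ i, star (u i) ⬝ᵥ u i = 1) (hv : ∀ i, star (v i) ⬝ᵥ v i = 1)
    (hρ : ρ = ∑ i, ((p i : ℝ) : ℂ) • (proj (u i) ⊗ₖ proj (v i)))
    (U : M2) (hU : U ∈ Matrix.unitaryGroup (Fin 2) ℂ)
    (V : M3) (hV : V ∈ Matrix.unitaryGroup (Fin 3) ℂ) :
    Real.sqrt ((expval ρ (Obs1 U V))^2 + 9 * (expval ρ (Obs2 U V))^2)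
      ≤ expval ρ (Obs0 U V) :=
  stmt_10_general ρ n p u v hp0 hu hv hρ U hU V hV
end
end

section
/- If a two-qubit density matrix $\rho$ satisfies $\langle I_2\otimes I_2 + A_3\otimes B_3\rangle_\rho \geq \big(\langle I_2\otimes B_3 + A_3\otimes I_2\rangle_\rho^2 + \langle A_1\otimes B_1 + A_2\otimes B_2\rangle_\rho^2\big)^{1/2}$ for all observables $A_i = U\sigma_i U^\dagger$, $B_j = V\sigma_j V^\dagger$ with $U,V$ ranging over all $2\times 2$ unitaries, then the partial transpose $\rho^{T_1}$ is positive semidefinite. -/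
open Matrix Kronecker
open scoped ComplexOrder

noncomputable section

abbrev M4 : Type := Matrix (Fin 2 × Fin 2) (Fin 2 × Fin 2) ℂ

def QA (U : M2) (i : Fin 3) : M2 := U * (![sig1, sig2, sig3] i) * Uᴴ

/-- I⊗I + A₃⊗B₃ -/
def Q0 (U V : M2) : M4 := (1:M2) ⊗ₖ (1:M2) + QA U 2 ⊗ₖ QA V 2
/-- I⊗B₃ + A₃⊗I -/
def Q1 (U V : M2) : M4 := (1:M2) ⊗ₖ QA V 2 + QA U 2 ⊗ₖ (1:M2)
/-- A₁⊗B₁ + A₂⊗B₂ -/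
def Q2 (U V : M2) : M4 := QA U 0 ⊗ₖ QA V 0 + QA U 1 ⊗ₖ QA V 1

/-!
Write `ψ` in Schmidt form `ψ = s₀ ḡ₀ ⊗ v₀ + s₁ ḡ₁ ⊗ v₁`, where `gₖ`, `vₖ` are the columns of
unitaries `G`, `V` and `sₖ` is real; this is a singular value decomposition of the coefficient
matrix of `ψ`. Then `⟨ψ|ρ^{T₁}|ψ⟩ = Tr(ρ (|ψ⟩⟨ψ|)^{T₁})`, and for the observables built from
`Aᵢ = G σᵢ G†`, `Bⱼ = V σⱼ V†`,
`(|ψ⟩⟨ψ|)^{T₁} = (s₀² + s₁²)/4 · Q₀ + (s₀² - s₁²)/4 · Q₁ + s₀ s₁/2 · Q₂`.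
Since `((s₀² - s₁²)/4)² + (s₀ s₁/2)² = ((s₀² + s₁²)/4)²`, Cauchy–Schwarz and the hypothesis
for `(G, V)` make this expectation nonnegative.
-/

section SingularValueDecomposition

variable {𝕜 : Type*} [RCLike 𝕜]

theorem OrthonormalBasis.exists_norm_smul_eq_of_pairwise_inner_eq_zero {ι E : Type*}
    [Fintype ι] [NormedAddCommGroup E] [InnerProductSpace 𝕜 E] [FiniteDimensional 𝕜 E]
    (card_ι : Module.finrank 𝕜 E = Fintype.card ι) {f : ι → E}
    (hf : Pairwise fun i j => inner 𝕜 (f i) (f j) = 0) :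
    ∃ b : OrthonormalBasis ι 𝕜 E, ∀ i, f i = (‖f i‖ : 𝕜) • b i := by
  obtain ⟨b, hb⟩ := Orthonormal.exists_orthonormalBasis_extension_of_card_eq card_ι
    (v := fun i => (‖f i‖⁻¹ : 𝕜) • f i) (s := {i | f i ≠ 0})
    ⟨fun i => norm_smul_inv_norm i.2, fun i j hij => by
      simp [inner_smul_left, inner_smul_right, hf (Subtype.coe_injective.ne hij)]⟩
  refine ⟨b, fun i => ?_⟩
  by_cases hi : f i = 0
  · simp [hi]
  · rw [hb i hi, smul_smul, mul_inv_cancel₀ (by simpa using hi), one_smul]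

variable {n : Type*} [Fintype n] [DecidableEq n]

theorem Matrix.exists_eq_unitary_mul_diagonal_of_isDiag (N : Matrix n n 𝕜)
    (hN : (Nᴴ * N).IsDiag) :
    ∃ U ∈ unitaryGroup n 𝕜, ∃ s : n → ℝ, N = U * diagonal (fun k => (s k : 𝕜)) := by
  obtain ⟨b, hb⟩ := OrthonormalBasis.exists_norm_smul_eq_of_pairwise_inner_eq_zero
    (finrank_euclideanSpace (𝕜 := 𝕜) (ι := n)) (f := fun k => WithLp.toLp 2 (fun i => N i k))
    fun k l hkl => by
      dsimp only
      rw [EuclideanSpace.inner_toLp_toLp, dotProduct_comm]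
      simpa [mul_apply, dotProduct] using hN hkl
  refine ⟨_, (EuclideanSpace.basisFun n 𝕜).toMatrix_orthonormalBasis_mem_unitary b,
    fun k => ‖WithLp.toLp 2 (fun i => N i k)‖, ?_⟩
  ext i k
  rw [mul_diagonal, Module.Basis.toMatrix_apply, OrthonormalBasis.coe_toBasis_repr_apply,
    EuclideanSpace.basisFun_repr, mul_comm]
  exact congrArg (· i) (hb k)

theorem Matrix.exists_svd (M : Matrix n n 𝕜) :
    ∃ U ∈ unitaryGroup n 𝕜, ∃ W ∈ unitaryGroup n 𝕜, ∃ s : n → ℝ,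
      M = U * diagonal (fun k => (s k : 𝕜)) * Wᴴ := by
  have hH := isHermitian_conjTranspose_mul_self M
  set W : unitaryGroup n 𝕜 := hH.eigenvectorUnitary
  have hdiag : ((M * (W : Matrix n n 𝕜))ᴴ * (M * W)).IsDiag := by
    have := hH.conjStarAlgAut_star_eigenvectorUnitary
    rw [Unitary.conjStarAlgAut_star_apply] at this
    rw [conjTranspose_mul, ← star_eq_conjTranspose, Matrix.mul_assoc, ← Matrix.mul_assoc Mᴴ,
      ← Matrix.mul_assoc, this]
    exact isDiag_diagonal _
  obtain ⟨U, hU, s, hs⟩ := exists_eq_unitary_mul_diagonal_of_isDiag _ hdiag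
  refine ⟨U, hU, W, W.2, s, ?_⟩
  rw [← hs, Matrix.mul_assoc, ← star_eq_conjTranspose, Unitary.mul_star_self_of_mem W.2,
    Matrix.mul_one]

end SingularValueDecomposition

theorem Matrix.sub_kronecker {l m n p α : Type*} [Ring α] (A₁ A₂ : Matrix l m α)
    (B : Matrix n p α) : (A₁ - A₂) ⊗ₖ B = A₁ ⊗ₖ B - A₂ ⊗ₖ B := by
  ext; simp [sub_mul]

theorem Matrix.kronecker_sub {l m n p α : Type*} [Ring α] (A : Matrix l m α)
    (B₁ B₂ : Matrix n p α) : A ⊗ₖ (B₁ - B₂) = A ⊗ₖ B₁ - A ⊗ₖ B₂ := by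
  ext; simp [mul_sub]

theorem star_dotProduct_mulVec_eq_trace_mul_proj {n : Type} [Fintype n] (A : Matrix n n ℂ)
    (x : n → ℂ) : star x ⬝ᵥ (A *ᵥ x) = (A * proj x).trace := by
  rw [proj, mul_vecMulVec, trace_vecMulVec, dotProduct_comm]

theorem expval_add {n : Type} [Fintype n] (ρ A B : Matrix n n ℂ) :
    expval ρ (A + B) = expval ρ A + expval ρ B := by
  simp [expval, Matrix.mul_add, trace_add]

theorem expval_smul {n : Type} [Fintype n] (ρ A : Matrix n n ℂ) (r : ℝ) :
    expval ρ (r • A) = r * expval ρ A := by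
  simp [expval, trace_smul]

/-- `colOuter U k l = |uₖ⟩⟨uₗ|` for the columns `uₖ` of `U`. -/
def colOuter {m ι : Type*} [Fintype ι] [DecidableEq ι] (U : Matrix m ι ℂ) (k l : ι) :
    Matrix m m ℂ :=
  U * single k l (1 : ℂ) * Uᴴ

theorem colOuter_apply {m ι : Type*} [Fintype ι] [DecidableEq ι]
    (U : Matrix m ι ℂ) (k l : ι) (i j : m) : colOuter U k l i j = U i k * star (U j l) := by
  simp [colOuter, mul_apply, single_apply, ite_and]

section PartialTranspose

variable {d : ℕ}

theorem conjTranspose_PT (A : Matrix (Fin 2 × Fin d) (Fin 2 × Fin d) ℂ) : (PT A)ᴴ = PT Aᴴ :=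
  rfl

theorem Matrix.IsHermitian.PT {A : Matrix (Fin 2 × Fin d) (Fin 2 × Fin d) ℂ}
    (hA : A.IsHermitian) : (PT A).IsHermitian := by
  rw [IsHermitian, conjTranspose_PT, hA.eq]

theorem trace_PT_mul (A B : Matrix (Fin 2 × Fin d) (Fin 2 × Fin d) ℂ) :
    (PT A * B).trace = (A * PT B).trace := by
  let e : (Fin 2 × Fin d) × (Fin 2 × Fin d) ≃ (Fin 2 × Fin d) × (Fin 2 × Fin d) :=
    ⟨fun x => ((x.2.1, x.1.2), (x.1.1, x.2.2)), fun x => ((x.2.1, x.1.2), (x.1.1, x.2.2)),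
      fun _ => rfl, fun _ => rfl⟩
  simp only [trace, diag, mul_apply, ← Fintype.sum_prod_type']
  exact Fintype.sum_equiv e _ _ fun _ => rfl

theorem PT_proj_sum_eq_sum_colOuter_kronecker {ι : Type*} [Fintype ι] [DecidableEq ι]
    (G : Matrix (Fin 2) ι ℂ) (V : Matrix (Fin d) ι ℂ) (s : ι → ℂ) :
    PT (proj fun p => ∑ k, s k * star (G p.1 k) * V p.2 k) =
      ∑ k, ∑ l, (s k * star (s l)) • colOuter G l k ⊗ₖ colOuter V k l := by
  ext p q
  simp only [PT, proj, vecMulVec_apply, Pi.star_apply, star_sum, Matrix.sum_apply,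
    Matrix.smul_apply, kroneckerMap_apply, colOuter_apply, Finset.sum_mul_sum,
    star_mul', star_star, smul_eq_mul]
  refine Finset.sum_congr rfl fun k _ => Finset.sum_congr rfl fun l _ => ?_
  ring

end PartialTranspose

section TwoQubits

theorem QA_zero (U : M2) : QA U 0 = colOuter U 0 1 + colOuter U 1 0 := by
  simp [QA, sig1, colOuter, Matrix.mul_add, Matrix.add_mul]

theorem QA_one (U : M2) : QA U 1 = Complex.I • colOuter U 0 1 - Complex.I • colOuter U 1 0 := by
  simp only [QA, sig2, colOuter, Matrix.cons_val_one, Matrix.cons_val_zero, Matrix.mul_sub,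
    Matrix.sub_mul, Matrix.mul_smul, Matrix.smul_mul]

theorem QA_two (U : M2) : QA U 2 = colOuter U 0 0 - colOuter U 1 1 := by
  simp [QA, sig3, colOuter, Matrix.mul_sub, Matrix.sub_mul]

theorem colOuter_add_colOuter_of_mem_unitaryGroup {U : M2} (hU : U ∈ unitaryGroup (Fin 2) ℂ) :
    colOuter U 0 0 + colOuter U 1 1 = 1 := by
  have : single 0 0 (1 : ℂ) + single 1 1 1 = (1 : M2) := by
    ext i j; fin_cases i <;> fin_cases j <;> simp
  rw [colOuter, colOuter, ← Matrix.add_mul, ← Matrix.mul_add, this, Matrix.mul_one,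
    ← star_eq_conjTranspose, Unitary.mul_star_self_of_mem hU]

theorem Q2_eq (G V : M2) : Q2 G V = (2 : ℂ) •
    (colOuter G 0 1 ⊗ₖ colOuter V 1 0 + colOuter G 1 0 ⊗ₖ colOuter V 0 1) := by
  rw [Q2, QA_zero, QA_zero, QA_one, QA_one]
  simp only [add_kronecker, kronecker_add, sub_kronecker, kronecker_sub, smul_kronecker,
    kronecker_smul]
  match_scalars <;> simp only [mul_one, mul_neg, neg_neg, Complex.I_mul_I] <;> norm_num

variable {G V : M2} (hG : G ∈ unitaryGroup (Fin 2) ℂ) (hV : V ∈ unitaryGroup (Fin 2) ℂ)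
include hG hV

theorem Q0_eq : Q0 G V = (2 : ℂ) •
    (colOuter G 0 0 ⊗ₖ colOuter V 0 0 + colOuter G 1 1 ⊗ₖ colOuter V 1 1) := by
  rw [Q0, QA_two, QA_two]
  nth_rw 1 [← colOuter_add_colOuter_of_mem_unitaryGroup hG]
  rw [← colOuter_add_colOuter_of_mem_unitaryGroup hV]
  simp only [add_kronecker, kronecker_add, sub_kronecker, kronecker_sub]
  module

theorem Q1_eq : Q1 G V = (2 : ℂ) •
    (colOuter G 0 0 ⊗ₖ colOuter V 0 0 - colOuter G 1 1 ⊗ₖ colOuter V 1 1) := by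
  rw [Q1, QA_two, QA_two]
  nth_rw 1 [← colOuter_add_colOuter_of_mem_unitaryGroup hG]
  rw [← colOuter_add_colOuter_of_mem_unitaryGroup hV]
  simp only [add_kronecker, kronecker_add, sub_kronecker, kronecker_sub]
  module

theorem PT_proj_schmidt_eq (s : Fin 2 → ℝ) :
    PT (proj fun p => ∑ k, (s k : ℂ) * star (G p.1 k) * V p.2 k) =
      ((s 0 ^ 2 + s 1 ^ 2) / 4) • Q0 G V + ((s 0 ^ 2 - s 1 ^ 2) / 4) • Q1 G V
        + (s 0 * s 1 / 2) • Q2 G V := by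
  rw [PT_proj_sum_eq_sum_colOuter_kronecker, Q0_eq hG hV, Q1_eq hG hV, Q2_eq]
  simp only [Fin.sum_univ_two, Complex.star_def, Complex.conj_ofReal]
  module

end TwoQubits

theorem add_mul_add_mul_nonneg_of_sqrt_le {α β γ x y z : ℝ} (hα : 0 ≤ α)
    (hcoef : β ^ 2 + γ ^ 2 ≤ α ^ 2) (h : √(x ^ 2 + y ^ 2) ≤ z) :
    0 ≤ α * z + β * x + γ * y := by
  obtain ⟨hz, hxyz⟩ := Real.sqrt_le_iff.mp h
  have hsq : (β * x + γ * y) ^ 2 ≤ (α * z) ^ 2 := by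
    nlinarith [sq_nonneg (β * y - γ * x), mul_le_mul hcoef hxyz (by positivity) (sq_nonneg α)]
  linarith [(abs_le_of_sq_le_sq' hsq (mul_nonneg hα hz)).1]

theorem stmt_12_general (ρ : M4) (hpsd : ρ.PosSemidef)
    (h : ∀ (U V : M2), U ∈ Matrix.unitaryGroup (Fin 2) ℂ →
        V ∈ Matrix.unitaryGroup (Fin 2) ℂ →
        Real.sqrt ((expval ρ (Q1 U V))^2 + (expval ρ (Q2 U V))^2)
          ≤ expval ρ (Q0 U V)) :
    (PT ρ).PosSemidef := by
  refine .of_dotProduct_mulVec_nonneg hpsd.isHermitian.PT fun ψ => ?_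
  obtain ⟨V, hV, G, hG, s, hsvd⟩ := exists_svd (Matrix.of fun j i => ψ (i, j))
  have hψ : ψ = fun p => ∑ k, (s k : ℂ) * star (G p.1 k) * V p.2 k := by
    funext ⟨i, j⟩
    rw [← of_apply (fun j i => ψ (i, j)) j i, hsvd, mul_apply]
    simp only [mul_diagonal, conjTranspose_apply, RCLike.ofReal_eq_complex_ofReal]
    exact Finset.sum_congr rfl fun k _ => by ring
  have hre : (star ψ ⬝ᵥ (PT ρ *ᵥ ψ)).re = (s 0 ^ 2 + s 1 ^ 2) / 4 * expval ρ (Q0 G V)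
      + (s 0 ^ 2 - s 1 ^ 2) / 4 * expval ρ (Q1 G V) + s 0 * s 1 / 2 * expval ρ (Q2 G V) := by
    rw [star_dotProduct_mulVec_eq_trace_mul_proj, trace_PT_mul, hψ, PT_proj_schmidt_eq hG hV]
    change expval ρ _ = _
    rw [expval_add, expval_add, expval_smul, expval_smul, expval_smul]
  refine Complex.nonneg_iff.mpr
    ⟨hre ▸ ?_, (hpsd.isHermitian.PT.im_star_dotProduct_mulVec_self ψ).symm⟩
  exact add_mul_add_mul_nonneg_of_sqrt_le (by positivity) (le_of_eq (by ring)) (h G V hG hV)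

theorem stmt_12 (ρ : M4) (hpsd : ρ.PosSemidef) (htr : ρ.trace = 1)
    (h : ∀ (U V : M2), U ∈ Matrix.unitaryGroup (Fin 2) ℂ →
        V ∈ Matrix.unitaryGroup (Fin 2) ℂ →
        Real.sqrt ((expval ρ (Q1 U V))^2 + (expval ρ (Q2 U V))^2)
          ≤ expval ρ (Q0 U V)) :
    (PT ρ).PosSemidef :=
  stmt_12_general ρ hpsd h
end
end

section
/- For the pure state $|\chi\rangle = \alpha_0|01\rangle + \beta_0|10\rangle \in \mathbb{C}^2\otimes\mathbb{C}^3$ with $\alpha_0,\beta_0 \geq 0$, $\alpha_0^2+\beta_0^2=1$, and with the choice $U=I_2$, $V=I_3$ (so $A_i=\sigma_i$, $B_j=\lambda_j$), the violation value $F_{I_2,I_3}^{(3)}(|\chi\rangle\langle\chi|) = \big(\langle 3I_2\otimes\lambda_1 + 2\sigma_3\otimes I_3 - \sigma_3\otimes\lambda_1 + 2\sigma_3\otimes\lambda_2\rangle^2 + 9\langle\sigma_1\otimes\lambda_3 + \sigma_2\otimes\lambda_4\rangle^2\big)^{1/2} - \langle 2I_2\otimes I_3 - I_2\otimes\lambda_1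 + 2I_2\otimes\lambda_2 + 3\sigma_3\otimes\lambda_1\rangle$ (all expectations in the state $|\chi\rangle\langle\chi|$) equals $12\alpha_0\beta_0$. -/
open Matrix Kronecker
open scoped ComplexOrder

noncomputable section

/-!
For a vector `a e_p + b e_q` with real `a, b`, the expectation of any `M` is the quadratic form
`a² Re M_pp + a b Re (M_pq + M_qp) + b² Re M_qq`, so each expectation in the state `χ` only sees four
entries of the observable. Reading them off gives `⟨Obs0⟩ = ⟨Obs1⟩ = 0` and `⟨Obs2⟩ = 4 α₀ β₀`,
and the value is `√(9 · 16 α₀² β₀²) = 12 α₀ β₀`.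
-/

theorem expval_proj {n : Type} [Fintype n] (ψ : n → ℂ) (M : Matrix n n ℂ) :
    expval (proj ψ) M = (star ψ ⬝ᵥ M *ᵥ ψ).re := by
  rw [expval, proj, vecMulVec_mul, trace_vecMulVec, dotProduct_comm, dotProduct_mulVec]

theorem expval_proj_single_add_single {n : Type} [Fintype n] [DecidableEq n] (p q : n)
    (a b : ℝ) (M : Matrix n n ℂ) :
    expval (proj (Pi.single p (a : ℂ) + Pi.single q (b : ℂ))) M =
      a ^ 2 * (M p p).re + a * b * (M p q + M q p).re + b ^ 2 * (M q q).re := by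
  rw [expval_proj]
  simp [Matrix.mulVec_add, add_dotProduct, dotProduct_add, Matrix.col]
  ring

def chi (a b : ℝ) : Fin 2 × Fin 3 → ℂ := Pi.single (0, 1) (a : ℂ) + Pi.single (1, 0) (b : ℂ)

theorem expval_chi (a b : ℝ) (M : M6) :
    expval (proj (chi a b)) M =
      a ^ 2 * (M (0, 1) (0, 1)).re + a * b * (M (0, 1) (1, 0) + M (1, 0) (0, 1)).re
        + b ^ 2 * (M (1, 0) (1, 0)).re :=
  expval_proj_single_add_single _ _ a b M

theorem expval_chi_Obs0 (a b : ℝ) : expval (proj (chi a b)) (Obs0 1 1) = 0 := by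
  simp [expval_chi, Obs0, OA, OB, sig3, lam1, lam2]
  ring

theorem expval_chi_Obs1 (a b : ℝ) : expval (proj (chi a b)) (Obs1 1 1) = 0 := by
  simp [expval_chi, Obs1, OA, OB, sig3, lam1, lam2]
  ring

theorem expval_chi_Obs2 (a b : ℝ) : expval (proj (chi a b)) (Obs2 1 1) = 4 * a * b := by
  simp [expval_chi, Obs2, OA, OB, sig1, sig2, lam3, lam4]
  ring

theorem stmt_15_general (α0 β0 : ℝ) (hα : 0 ≤ α0) (hβ : 0 ≤ β0)
    (χ : Fin 2 × Fin 3 → ℂ)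
    (hχ : χ = fun p => if p = (0,1) then (α0 : ℂ) else if p = (1,0) then (β0 : ℂ) else 0) :
    Real.sqrt ((expval (proj χ) (Obs1 1 1))^2 + 9 * (expval (proj χ) (Obs2 1 1))^2)
      - expval (proj χ) (Obs0 1 1) = 12 * α0 * β0 := by
  have hχ_chi : χ = chi α0 β0 := by
    subst hχ
    funext p
    fin_cases p <;> simp [chi]
  rw [hχ_chi, expval_chi_Obs0, expval_chi_Obs1, expval_chi_Obs2,
    show (0 : ℝ) ^ 2 + 9 * (4 * α0 * β0) ^ 2 = (12 * α0 * β0) ^ 2 by ring,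
    Real.sqrt_sq (by positivity), sub_zero]

theorem stmt_15 (α0 β0 : ℝ) (hα : 0 ≤ α0) (hβ : 0 ≤ β0) (hnorm : α0^2 + β0^2 = 1)
    (χ : Fin 2 × Fin 3 → ℂ)
    (hχ : χ = fun p => if p = (0,1) then (α0 : ℂ) else if p = (1,0) then (β0 : ℂ) else 0) :
    Real.sqrt ((expval (proj χ) (Obs1 1 1))^2 + 9 * (expval (proj χ) (Obs2 1 1))^2)
      - expval (proj χ) (Obs0 1 1) = 12 * α0 * β0 :=
  stmt_15_general α0 β0 hα hβ χ hχ
end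
end
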